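/- Let θ ∈ ℝ and let θ₀, θ₁ be two distinct real numbers with f(θ₀) = f(θ₁) = θ, where f(x) = x² − x − 3. Then for all (x,y) ∈ ℝ² with L(x,y)·K(x,y) ≠ 0, one has L(x,y)·K(x,y)·Ψ_θ(F(x,y)) = A₁(x,y)·Ψ_{θ₀}(x,y)·Ψ_{θ₁}(x,y). -/
import Mathlib


/-- The quadratic polynomial `f(x) = x² - x - 3`. -/
noncomputable def hanoiF (x : ℝ) : ℝ := x ^ 2 - x - 3

/-- The two-dimensional rational map `F(x,y) = (x', y')`. -/
noncomputable def hanoiMap (p : ℝ × ℝ) : ℝ × ℝ :=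
  (p.1 + 2 * p.2 ^ 2 * (-p.1 ^ 2 + p.1 + p.2 ^ 2) /
      ((p.1 - 1 - p.2) * (p.1 ^ 2 - 1 + p.2 - p.2 ^ 2)),
   p.2 ^ 2 * (p.1 - 1 + p.2) /
      ((p.1 - 1 - p.2) * (p.1 ^ 2 - 1 + p.2 - p.2 ^ 2)))

/-- `Ψ_θ(x,y) = x² - 1 - xy - 2y² - θy`. -/
noncomputable def hanoiPsiTheta (θ x y : ℝ) : ℝ := x ^ 2 - 1 - x * y - 2 * y ^ 2 - θ * y

/-- `L(x,y) = x - 1 - y`. -/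
noncomputable def hanoiL (x y : ℝ) : ℝ := x - 1 - y

/-- `K(x,y) = x² - 1 + y - y²`. -/
noncomputable def hanoiK (x y : ℝ) : ℝ := x ^ 2 - 1 + y - y ^ 2

/-- `A₁(x,y) = x - 1 + y`. -/
noncomputable def hanoiA1 (x y : ℝ) : ℝ := x - 1 + y

/-- If `θ₀ ≠ θ₁` are the two distinct real roots of `f(x) = θ`, then
`L·K·Ψ_θ(F(x,y)) = A₁·Ψ_{θ₀}·Ψ_{θ₁}` wherever `L·K ≠ 0`. -/
theorem psiTheta_pullback (θ θ₀ θ₁ : ℝ) (hne : θ₀ ≠ θ₁)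
    (h0 : hanoiF θ₀ = θ) (h1 : hanoiF θ₁ = θ) (x y : ℝ)
    (hLK : hanoiL x y * hanoiK x y ≠ 0) :
    hanoiL x y * hanoiK x y *
        hanoiPsiTheta θ (hanoiMap (x, y)).1 (hanoiMap (x, y)).2 =
      hanoiA1 x y * hanoiPsiTheta θ₀ x y * hanoiPsiTheta θ₁ x y := by
  have hL : x - 1 - y ≠ 0 := by
    intro h; apply hLK; simp [hanoiL, hanoiK, h]
  have hK : x ^ 2 - 1 + y - y ^ 2 ≠ 0 := by
    intro h; apply hLK; simp [hanoiL, hanoiK, h]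
  have hsum : θ₁ = 1 - θ₀ := by
    have : (θ₀ - θ₁) * (θ₀ + θ₁ - 1) = 0 := by
      have := h0.trans h1.symm
      unfold hanoiF at this
      nlinarith [this]
    rcases mul_eq_zero.1 this with h | h
    · exact absurd (by linarith) hne
    · linarith
  have hθ : θ = θ₀ ^ 2 - θ₀ - 3 := by rw [← h0]; rfl
  subst hθ; subst hsum
  unfold hanoiL hanoiK hanoiA1 hanoiPsiTheta hanoiMap
  simp only
  field_simp
  ring
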